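/- arXiv:1301.6977 — 3 statements merged into one kernel-verified Lean document; each statement's English description precedes it below -/
import Mathlib

section
/- For every real number α in the open interval (0,1), there exists a sequence {l_i} of natural numbers with l_i ≥ 5 for all i such that the infinite product of (l_i - 2)/l_i converges to α, i.e., lim_{i→∞} ∏_{j=0}^{i} (l_j - 2)/l_j = α. -/
/-!
Greedy construction: starting from the empty product `1 > α`, always take the smallest `l ≥ 5`
that keeps the partial product above `α`. The partial products decrease to some `L ≥ α`.
If `L > α`, a single `m` with `L (m - 2)/m > α` would be admissible at every step, so every
chosen `l` is at most `m` and the products decay at least like `((m - 2)/m)ⁿ → 0`, which is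
absurd.
-/

open Filter Topology

noncomputable def shrinkFactor (l : ℕ) : ℝ := ((l : ℝ) - 2) / l

lemma shrinkFactor_eq_one_sub {l : ℕ} (hl : 0 < l) : shrinkFactor l = 1 - 2 / l := by
  have : (l : ℝ) ≠ 0 := by positivity
  rw [shrinkFactor, sub_div, div_self this]

lemma shrinkFactor_nonneg {l : ℕ} (hl : 2 ≤ l) : 0 ≤ shrinkFactor l := by
  have : (2 : ℝ) ≤ l := by exact_mod_cast hl
  unfold shrinkFactor
  exact div_nonneg (by linarith) (by linarith)

lemma shrinkFactor_lt_one {l : ℕ} (hl : 0 < l) : shrinkFactor l < 1 := by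
  rw [shrinkFactor_eq_one_sub hl]
  have : (0 : ℝ) < 2 / l := by positivity
  linarith

lemma shrinkFactor_le_shrinkFactor {k m : ℕ} (hk : 0 < k) (hkm : k ≤ m) :
    shrinkFactor k ≤ shrinkFactor m := by
  rw [shrinkFactor_eq_one_sub hk, shrinkFactor_eq_one_sub (hk.trans_le hkm)]
  gcongr

lemma tendsto_shrinkFactor : Tendsto shrinkFactor atTop (𝓝 1) := by
  have h : Tendsto (fun l : ℕ => 1 - 2 / (l : ℝ)) atTop (𝓝 (1 - 0)) :=
    tendsto_const_nhds.sub (tendsto_const_div_atTop_nhds_zero_nat 2)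
  rw [sub_zero] at h
  refine h.congr' ?_
  filter_upwards [eventually_gt_atTop 0] with l hl
  exact (shrinkFactor_eq_one_sub hl).symm

lemma exists_lt_mul_shrinkFactor {α x : ℝ} (h : α < x) :
    ∃ l, 5 ≤ l ∧ α < x * shrinkFactor l := by
  have hlim : Tendsto (fun l => x * shrinkFactor l) atTop (𝓝 x) := by
    simpa using tendsto_shrinkFactor.const_mul x
  exact ((eventually_ge_atTop 5).and (hlim.eventually (lt_mem_nhds h))).exists

noncomputable def greedyIndex {α : ℝ} (x : {x : ℝ // α < x}) : ℕ :=
  Nat.find (exists_lt_mul_shrinkFactor x.2)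

lemma five_le_greedyIndex {α : ℝ} (x : {x : ℝ // α < x}) : 5 ≤ greedyIndex x :=
  (Nat.find_spec (exists_lt_mul_shrinkFactor x.2)).1

lemma lt_mul_shrinkFactor_greedyIndex {α : ℝ} (x : {x : ℝ // α < x}) :
    α < x * shrinkFactor (greedyIndex x) :=
  (Nat.find_spec (exists_lt_mul_shrinkFactor x.2)).2

lemma greedyIndex_le {α : ℝ} {x : {x : ℝ // α < x}} {m : ℕ} (hm : 5 ≤ m)
    (h : α < x * shrinkFactor m) : greedyIndex x ≤ m :=
  Nat.find_min' _ ⟨hm, h⟩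

noncomputable def greedyProduct {α : ℝ} (hα : α < 1) : ℕ → {x : ℝ // α < x}
  | 0 => ⟨1, hα⟩
  | n + 1 =>
    ⟨greedyProduct hα n * shrinkFactor (greedyIndex (greedyProduct hα n)),
      lt_mul_shrinkFactor_greedyIndex _⟩

section greedyProduct

variable {α : ℝ} (hα : α < 1)

lemma greedyProduct_succ (n : ℕ) :
    (greedyProduct hα (n + 1) : ℝ) =
      greedyProduct hα n * shrinkFactor (greedyIndex (greedyProduct hα n)) :=
  rfl

lemma prod_shrinkFactor_greedyIndex (n : ℕ) :
    ∏ j ∈ Finset.range n, shrinkFactor (greedyIndex (greedyProduct hα j)) =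
      greedyProduct hα n := by
  induction n with
  | zero => rfl
  | succ n ih => rw [Finset.prod_range_succ, ih, greedyProduct_succ]

lemma antitone_greedyProduct (h0 : 0 < α) :
    Antitone fun n => (greedyProduct hα n : ℝ) := by
  refine antitone_nat_of_succ_le fun n => ?_
  rw [greedyProduct_succ]
  have hpos : 0 < (greedyProduct hα n : ℝ) := h0.trans (greedyProduct hα n).2
  have hl := five_le_greedyIndex (greedyProduct hα n)
  exact mul_le_of_le_one_right hpos.le (shrinkFactor_lt_one (by omega)).le

theorem tendsto_greedyProduct (h0 : 0 < α) :
    Tendsto (fun n => (greedyProduct hα n : ℝ)) atTop (𝓝 α) := by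
  set P : ℕ → ℝ := fun n => greedyProduct hα n
  have hbdd : BddBelow (Set.range P) :=
    ⟨α, Set.forall_mem_range.2 fun n => (greedyProduct hα n).2.le⟩
  have hlim : Tendsto P atTop (𝓝 (⨅ n, P n)) :=
    tendsto_atTop_ciInf (antitone_greedyProduct hα h0) hbdd
  have hαL : α ≤ ⨅ n, P n := le_ciInf fun n => (greedyProduct hα n).2.le
  suffices ¬ α < ⨅ n, P n by rwa [le_antisymm (not_lt.1 this) hαL] at hlim
  intro hL
  obtain ⟨m, hm5, hm⟩ := exists_lt_mul_shrinkFactor hL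
  have hsm : 0 ≤ shrinkFactor m := shrinkFactor_nonneg (by omega)
  have hstep (n : ℕ) : P (n + 1) ≤ shrinkFactor m * P n := by
    have hPn : 0 < P n := h0.trans (greedyProduct hα n).2
    have hl5 := five_le_greedyIndex (greedyProduct hα n)
    have hle : greedyIndex (greedyProduct hα n) ≤ m :=
      greedyIndex_le hm5 (hm.trans_le (by gcongr; exact ciInf_le hbdd n))
    rw [mul_comm]
    exact mul_le_mul_of_nonneg_left (shrinkFactor_le_shrinkFactor (by omega) hle) hPn.le
  have hdecay : Tendsto (fun n => shrinkFactor m ^ n * P 0) atTop (𝓝 0) := by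
    simpa using
      (tendsto_pow_atTop_nhds_zero_of_lt_one hsm (shrinkFactor_lt_one (by omega))).mul_const (P 0)
  have hL0 : ⨅ n, P n ≤ 0 :=
    le_of_tendsto_of_tendsto' hlim hdecay fun n => le_geom hsm n fun k _ => hstep k
  linarith

end greedyProduct

/-- For every real α ∈ (0,1) there is a sequence of naturals `l i ≥ 5` such that
the partial products `∏_{j=0}^{i} (l j - 2)/(l j)` converge to α. -/
theorem stmt_0 (α : ℝ) (hα : α ∈ Set.Ioo (0:ℝ) 1) :
    ∃ l : ℕ → ℕ, (∀ i, 5 ≤ l i) ∧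
      Tendsto (fun i => ∏ j ∈ Finset.range (i + 1), ((l j : ℝ) - 2) / (l j))
        atTop (nhds α) := by
  obtain ⟨h0, h1⟩ := hα
  refine ⟨fun j => greedyIndex (greedyProduct h1 j), fun j => five_le_greedyIndex _, ?_⟩
  exact ((tendsto_greedyProduct h1 h0).comp (tendsto_add_atTop_nat 1)).congr fun i =>
    (prod_shrinkFactor_greedyIndex h1 (i + 1)).symm
end

section
/- Let {l_i} be a sequence of integers with l_i ≥ 5, and suppose ∏_{j=0}^{i}(l_j-2)/l_j → α. Then the sequence L_i = log(∏_{k=0}^{i} ((l_k-2)!/2)^{p_k}) / log(∏_{k=0}^{i} (l_k!/2)^{q_k}), where p_k = ∏_{j=0}^{k-1}(l_j-2) and q_k = ∏_{j=0}^{k-1} l_j (with empty products equal to 1), converges to α. -/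
/-!
Write the ratio as `∑ aₖ / ∑ bₖ` with `bₖ = qₖ log (lₖ!/2)`. The `bₖ` are bounded below by
`log 3`, so by Stolz–Cesàro it suffices that `aₖ / bₖ → α`. Now `aₖ / bₖ = Pₖ rₖ` with
`Pₖ = ∏_{j<k} (l_j - 2)/l_j → α` and `rₖ = log ((lₖ-2)!/2) / log (lₖ!/2) ∈ [0, 1]`. For `α = 0`
this is enough. For `α ≠ 0`, `P_{k+1}/Pₖ → 1` forces `lₖ → ∞`, and then `rₖ → 1` because
`log (n!/2) - log ((n-2)!/2) = log (n(n-1))` is negligible against `log (n!/2) ≥ (n-2) log 2`.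
-/

open Filter Topology

theorem tendsto_sum_range_div_sum_range {a b : ℕ → ℝ} {α : ℝ} (hb : ∀ k, 0 < b k)
    (hsum : Tendsto (fun n => ∑ k ∈ Finset.range n, b k) atTop atTop)
    (h : Tendsto (fun k => a k / b k) atTop (𝓝 α)) :
    Tendsto (fun n => (∑ k ∈ Finset.range n, a k) / ∑ k ∈ Finset.range n, b k) atTop (𝓝 α) := by
  have hlo : (fun k => a k - α * b k) =o[atTop] b := by
    rw [Asymptotics.isLittleO_iff_tendsto fun k hk => absurd hk (hb k).ne']
    have h' := h.sub_const α
    rw [sub_self] at h'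
    exact h'.congr fun k => by rw [sub_div, mul_div_cancel_right₀ _ (hb k).ne']
  have hlim := (hlo.sum_range (fun k => (hb k).le) hsum).tendsto_div_nhds_zero.const_add α
  rw [add_zero] at hlim
  refine hlim.congr' ?_
  filter_upwards [hsum.eventually_gt_atTop 0] with n hn
  rw [Finset.sum_sub_distrib, ← Finset.mul_sum]
  field_simp
  ring

theorem tendsto_one_of_tendsto_prod_range {K : Type*} [NormedField K] {x : ℕ → K} {α : K}
    (hα : α ≠ 0) (h : Tendsto (fun n => ∏ j ∈ Finset.range n, x j) atTop (𝓝 α)) :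
    Tendsto x atTop (𝓝 1) := by
  have hlim := ((tendsto_add_atTop_iff_nat 1).2 h).div h hα
  rw [div_self hα] at hlim
  refine hlim.congr' ?_
  filter_upwards [h.eventually_ne hα] with n hn
  simp only [Pi.div_apply, Finset.prod_range_succ, mul_div_cancel_left₀ _ hn]

theorem tendsto_atTop_of_tendsto_sub_div_self {ι : Type*} {l : Filter ι} {x : ι → ℝ} {c : ℝ}
    (hc : 0 < c) (hx : ∀ k, 0 < x k) (h : Tendsto (fun k => (x k - c) / x k) l (𝓝 1)) :
    Tendsto x l atTop := by
  have hinv : Tendsto (fun k => c / x k) l (𝓝[>] 0) := by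
    refine tendsto_nhdsWithin_iff.2 ⟨?_, .of_forall fun k => div_pos hc (hx k)⟩
    have h' := tendsto_const_nhds (x := (1 : ℝ)).sub h
    rw [sub_self] at h'
    refine h'.congr fun k => ?_
    have := (hx k).ne'
    field_simp
    ring
  refine (hinv.inv_tendsto_nhdsGT_zero.const_mul_atTop hc).congr fun k => ?_
  simp only [Pi.inv_apply, inv_div]
  field_simp

theorem tendsto_mul_of_isBoundedUnder_of_tendsto_one {ι R : Type*} [NormedRing R]
    {l : Filter ι} {P r : ι → R} {α : R} (hP : Tendsto P l (𝓝 α))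
    (hr : IsBoundedUnder (· ≤ ·) l ((‖·‖) ∘ r)) (hr1 : α ≠ 0 → Tendsto r l (𝓝 1)) :
    Tendsto (fun k => P k * r k) l (𝓝 α) := by
  rcases eq_or_ne α 0 with rfl | hα
  · exact hP.zero_mul_isBoundedUnder_le hr
  · simpa using hP.mul (hr1 hα)

theorem tendsto_sum_range_atTop_of_le {b : ℕ → ℝ} {c : ℝ} (hc : 0 < c) (hb : ∀ k, c ≤ b k) :
    Tendsto (fun n => ∑ k ∈ Finset.range n, b k) atTop atTop := by
  refine tendsto_atTop_mono (fun n => ?_) (tendsto_natCast_atTop_atTop.atTop_mul_const hc)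
  simpa using Finset.card_nsmul_le_sum (Finset.range n) _ _ fun k _ => hb k

/-- `log |Aₙ|` for `n ≥ 2`. -/
noncomputable def logHalfFactorial (n : ℕ) : ℝ := Real.log ((n.factorial : ℝ) / 2)

theorem logHalfFactorial_monotone : Monotone logHalfFactorial := fun m n hmn =>
  Real.log_le_log (by positivity) <| by gcongr

theorem logHalfFactorial_pos {n : ℕ} (hn : 3 ≤ n) : 0 < logHalfFactorial n := by
  refine Real.log_pos ?_
  have h6 : (6 : ℝ) ≤ n.factorial := by exact_mod_cast (Nat.factorial_le hn : 6 ≤ n.factorial)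
  linarith

theorem logHalfFactorial_eq_log_add {n : ℕ} (hn : 2 ≤ n) :
    logHalfFactorial n = Real.log (n * (n - 1)) + logHalfFactorial (n - 2) := by
  obtain ⟨m, rfl⟩ := Nat.exists_eq_add_of_le' hn
  have hsplit : ((m + 2).factorial : ℝ) / 2 =
      ((m + 2 : ℕ) * ((m + 2 : ℕ) - 1)) * (m.factorial / 2) := by
    simp only [Nat.factorial_succ]
    push_cast
    ring
  rw [logHalfFactorial, logHalfFactorial, hsplit, Nat.add_sub_cancel,
    Real.log_mul (by push_cast; ring_nf; positivity) (by positivity)]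

theorem abs_logHalfFactorial_sub_two_div_le_one {n : ℕ} (hn : 5 ≤ n) :
    |logHalfFactorial (n - 2) / logHalfFactorial n| ≤ 1 := by
  have hB := logHalfFactorial_pos (by omega : 3 ≤ n)
  rw [abs_div, abs_of_pos (logHalfFactorial_pos (by omega)), abs_of_pos hB]
  exact div_le_one_of_le₀ (logHalfFactorial_monotone (Nat.sub_le _ _)) hB.le

theorem mul_log_two_le_logHalfFactorial {n : ℕ} (hn : 2 ≤ n) :
    (n - 2) * Real.log 2 ≤ logHalfFactorial n := by
  have hpow : ((2 : ℝ) ^ (n - 2)) ≤ (n.factorial : ℝ) / 2 := by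
    rw [le_div_iff₀ two_pos]
    exact_mod_cast (mul_comm _ _).trans_le (Nat.factorial_mul_pow_sub_le_factorial hn)
  calc (n - 2) * Real.log 2 = Real.log (2 ^ (n - 2)) := by
        rw [Real.log_pow, Nat.cast_sub hn]; rfl
    _ ≤ logHalfFactorial n := Real.log_le_log (by positivity) hpow

theorem tendsto_logHalfFactorial_sub_two_div :
    Tendsto (fun n => logHalfFactorial (n - 2) / logHalfFactorial n) atTop (𝓝 1) := by
  have hlog2 : 0 < Real.log 2 := Real.log_pos one_lt_two
  have hbound : Tendsto (fun n : ℕ => Real.log n / (Real.log 2 / 2 * n + -Real.log 2))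
      atTop (𝓝 0) := by
    refine ((Real.tendsto_pow_log_div_mul_add_atTop (Real.log 2 / 2) (-Real.log 2) 1
      (by positivity)).comp tendsto_natCast_atTop_atTop).congr fun n => ?_
    simp only [Function.comp_apply, pow_one]
  have hgap : Tendsto (fun n : ℕ => Real.log (n * (n - 1)) / logHalfFactorial n)
      atTop (𝓝 0) := by
    refine tendsto_of_tendsto_of_tendsto_of_le_of_le' tendsto_const_nhds hbound ?_ ?_
    · filter_upwards [eventually_ge_atTop 3] with n hn
      have hn' : (3 : ℝ) ≤ n := by exact_mod_cast hn
      exact div_nonneg (Real.log_nonneg (by nlinarith)) (logHalfFactorial_pos hn).le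
    · filter_upwards [eventually_ge_atTop 3] with n hn
      have hn' : (3 : ℝ) ≤ n := by exact_mod_cast hn
      have hsq : Real.log (n * (n - 1)) ≤ 2 * Real.log n := by
        rw [← Real.log_rpow (by positivity)]
        exact Real.log_le_log (by nlinarith) (by norm_num; nlinarith)
      calc Real.log (n * (n - 1)) / logHalfFactorial n
          ≤ 2 * Real.log n / ((n - 2) * Real.log 2) :=
            div_le_div₀ (by have := Real.log_nonneg (by linarith : (1:ℝ) ≤ n); positivity) hsq
              (by nlinarith) (mul_log_two_le_logHalfFactorial (by omega))
        _ = Real.log n / (Real.log 2 / 2 * n + -Real.log 2) := by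
            field_simp
            ring
  have hlim := hgap.const_sub 1
  rw [sub_zero] at hlim
  refine hlim.congr' ?_
  filter_upwards [eventually_ge_atTop 3] with n hn
  have hB := logHalfFactorial_pos hn
  rw [eq_div_iff hB.ne', sub_mul, div_mul_cancel₀ _ hB.ne', one_mul,
    logHalfFactorial_eq_log_add (by omega : 2 ≤ n)]
  ring

/-- Key dimension computation: if `l i ≥ 5` and `∏_{j≤i} (l j - 2)/(l j) → α`, then the
ratio of the logs of the orders of the iterated wreath products
`A_{l_i-2} ≀ ⋯ ≀ A_{l_0-2}` and `A_{l_i} ≀ ⋯ ≀ A_{l_0}` also converges to α. -/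
theorem stmt_12 (l : ℕ → ℕ) (hl : ∀ i, 5 ≤ l i) (α : ℝ)
    (h : Tendsto (fun i => ∏ j ∈ Finset.range (i + 1), ((l j : ℝ) - 2) / (l j))
      atTop (nhds α)) :
    Tendsto (fun i =>
        (∑ k ∈ Finset.range (i + 1),
            (∏ j ∈ Finset.range k, ((l j : ℝ) - 2)) *
              Real.log (((l k - 2).factorial : ℝ) / 2)) /
        (∑ k ∈ Finset.range (i + 1),
            (∏ j ∈ Finset.range k, (l j : ℝ)) *
              Real.log (((l k).factorial : ℝ) / 2)))
      atTop (nhds α) := by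
  have hl5 : ∀ k, (5 : ℝ) ≤ l k := fun k => by exact_mod_cast hl k
  have hB3 : 0 < logHalfFactorial 3 := logHalfFactorial_pos le_rfl
  have hb : ∀ k,
      logHalfFactorial 3 ≤ (∏ j ∈ Finset.range k, (l j : ℝ)) * logHalfFactorial (l k) := fun k =>
    (logHalfFactorial_monotone (by linarith [hl k])).trans <|
      le_mul_of_one_le_left (logHalfFactorial_pos (by linarith [hl k])).le
        (Finset.one_le_prod fun j _ => by linarith [hl5 j])
  have hP : Tendsto (fun k => ∏ j ∈ Finset.range k, ((l j : ℝ) - 2) / l j) atTop (𝓝 α) :=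
    (tendsto_add_atTop_iff_nat 1).1 h
  have hr : α ≠ 0 → Tendsto (fun k => logHalfFactorial (l k - 2) / logHalfFactorial (l k))
      atTop (𝓝 1) := fun hα =>
    have hlk := tendsto_atTop_of_tendsto_sub_div_self two_pos (fun k => by linarith [hl5 k])
      (tendsto_one_of_tendsto_prod_range hα hP)
    tendsto_logHalfFactorial_sub_two_div.comp (tendsto_natCast_atTop_iff.1 hlk)
  have hratio := tendsto_mul_of_isBoundedUnder_of_tendsto_one hP
    (isBoundedUnder_of_eventually_le (a := 1)
      (.of_forall fun k => abs_logHalfFactorial_sub_two_div_le_one (hl k))) hr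
  refine (tendsto_sum_range_div_sum_range (fun k => hB3.trans_le (hb k))
    (tendsto_sum_range_atTop_of_le hB3 hb) (hratio.congr fun k => ?_)).comp
    (tendsto_add_atTop_nat 1)
  simp only [Finset.prod_div_distrib, mul_div_mul_comm, logHalfFactorial]
end

section
/- Let {l_i} be a sequence of integers with l_i ≥ 5 and let α_i = ∏_{j=0}^{i-1}(l_j-2)/l_j. Then for each i, ∑_{k=0}^{i} (∏_{j=0}^{k-1}(l_j-2))·log((l_k-2)!) ≥ α_i · (1/(1+T))·∑_{k=0}^{i}(∏_{j=0}^{k-1} l_j)·log(l_k!) where T ≤ 16/l_i; in particular if l_i → ∞ then liminf of the ratio of the two weighted log-factorial sums is at least lim α_i. -/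
/-!
Write `P k = ∏_{j<k} (l j - 2)` and `Q k = ∏_{j<k} l j`, so that `α_i = P i / Q i`. For `k ≤ i`
we have `α_i Q k = P i / ∏_{k≤j<i} l j ≤ P k` and `log (l!) ≤ 2 log l + log ((l-2)!)`, hence
`α_i · logFactorialSum ≤ reducedLogFactorialSum + 2 P i ∑_{k≤i} log (l k) / ∏_{k≤j<i} l j`.
Since `l j ≥ 5`, the last sum is dominated by its top term: it is at most `3/2 · log (l i)`.
Finally `3 l log l ≤ 16 log ((l-2)!)` bounds the error by `16 / l i` times the `k = i` term
of the reduced sum. Letting `i → ∞` gives the liminf.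
-/

open Filter Finset Real
open scoped Nat

lemma log_le_half_self {x : ℝ} (hx : 0 ≤ x) : log x ≤ x / 2 := by
  rcases hx.eq_or_lt with rfl | hx
  · simp
  have h := log_le_sub_one_of_pos (sqrt_pos.2 hx)
  rw [log_sqrt hx.le] at h
  nlinarith [sq_sqrt hx.le, sq_nonneg (√x - 2)]

lemma three_halves_le_log_five : 3 / 2 ≤ log 5 := by
  have hexp : exp 3 ≤ 5 ^ 2 := by
    have := exp_one_lt_d9
    calc exp 3 = exp 1 ^ 3 := by rw [← exp_nat_mul]; norm_num
      _ ≤ 2.7182818286 ^ 3 := by gcongr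
      _ ≤ 5 ^ 2 := by norm_num
  have h := (le_log_iff_exp_le (by positivity)).2 hexp
  rw [log_pow] at h
  push_cast at h
  linarith

lemma log_factorial_le {n : ℕ} (hn : 2 ≤ n) :
    log (n ! : ℝ) ≤ 2 * log n + log ((n - 2)! : ℝ) := by
  have hle : n ! ≤ n ^ 2 * (n - 2)! := by
    rw [← Nat.factorial_mul_descFactorial hn, mul_comm]
    exact Nat.mul_le_mul_right _ (Nat.descFactorial_le_pow n 2)
  calc log (n ! : ℝ) ≤ log ((n ^ 2 * (n - 2)! : ℕ) : ℝ) :=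
        log_le_log (by positivity) (by exact_mod_cast hle)
    _ = 2 * log n + log ((n - 2)! : ℝ) := by
        push_cast
        rw [log_mul (by positivity) (by positivity), log_pow]
        norm_num

lemma three_mul_log_le_log_factorial_sub_two {n : ℕ} (hn : 5 ≤ n) :
    3 * n * log n ≤ 16 * log ((n - 2)! : ℝ) := by
  induction n, hn using Nat.le_induction with
  | base =>
    have h := log_le_log (by positivity) (show (5 : ℝ) ^ 15 ≤ 6 ^ 16 by norm_num)
    rw [log_pow, log_pow] at h
    norm_num [Nat.factorial] at h ⊢
    linarith
  | succ n hn ih =>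
    obtain ⟨m, rfl⟩ : ∃ m, n = m + 2 := ⟨n - 2, by omega⟩
    have hm : (3 : ℝ) ≤ m := by exact_mod_cast (show 3 ≤ m by omega)
    rw [show m + 2 + 1 - 2 = m + 1 by omega, Nat.factorial_succ]
    rw [show m + 2 - 2 = m by omega] at ih
    push_cast at ih ⊢
    rw [log_mul (by positivity) (by positivity)]
    have hincr : ((m : ℝ) + 2) * (log (m + 2 + 1) - log (m + 2)) ≤ 1 := by
      rw [← log_div (by positivity) (by positivity)]
      have h := log_le_sub_one_of_pos (show (0 : ℝ) < (m + 2 + 1) / (m + 2) by positivity)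
      calc ((m : ℝ) + 2) * log ((m + 2 + 1) / (m + 2))
          ≤ (m + 2) * ((m + 2 + 1) / (m + 2) - 1) := by gcongr
        _ = 1 := by field_simp; ring
    have hsq : log ((m : ℝ) + 2 + 1) ≤ 2 * log (m + 1) := by
      calc log ((m : ℝ) + 2 + 1) ≤ log (((m : ℝ) + 1) ^ 2) :=
            log_le_log (by positivity) (by nlinarith)
        _ = 2 * log (m + 1) := by rw [log_pow]; norm_num
    have hone : 1 ≤ log ((m : ℝ) + 1) :=
      (le_log_iff_exp_le (by positivity)).2 (by linarith [exp_one_lt_d9])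
    linarith

lemma sum_log_div_prod_Ico_le {x : ℕ → ℝ} (hx : ∀ j, 5 ≤ x j) (i : ℕ) :
    ∑ k ∈ range (i + 1), log (x k) / ∏ j ∈ Ico k i, x j ≤ 3 / 2 * log (x i) := by
  have hlog (j : ℕ) : 3 / 2 ≤ log (x j) :=
    three_halves_le_log_five.trans (log_le_log (by norm_num) (hx j))
  induction i with
  | zero =>
    rw [sum_range_one, Ico_self, prod_empty, div_one]
    linarith [hlog 0]
  | succ i ih =>
    have hxi : 0 < x i := by linarith [hx i]
    have hshift : ∑ k ∈ range (i + 1), log (x k) / ∏ j ∈ Ico k (i + 1), x j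
        = (∑ k ∈ range (i + 1), log (x k) / ∏ j ∈ Ico k i, x j) / x i := by
      rw [sum_div]
      refine sum_congr rfl fun k hk => ?_
      rw [prod_Ico_succ_top (Nat.lt_succ_iff.mp (mem_range.mp hk)), div_div]
    have htail : (∑ k ∈ range (i + 1), log (x k) / ∏ j ∈ Ico k i, x j) / x i ≤ 3 / 4 := by
      rw [div_le_iff₀ hxi]
      linarith [log_le_half_self hxi.le]
    rw [sum_range_succ, hshift, Ico_self, prod_empty, div_one]
    linarith [hlog (i + 1)]

lemma prod_div_mul_prod_range {K : Type*} [Field K] {a b : ℕ → K} (hb : ∀ j, b j ≠ 0)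
    {k i : ℕ} (hki : k ≤ i) :
    (∏ j ∈ range i, a j / b j) * ∏ j ∈ range k, b j =
      (∏ j ∈ range i, a j) / ∏ j ∈ Ico k i, b j := by
  rw [prod_div_distrib, ← prod_range_mul_prod_Ico b hki]
  have := prod_ne_zero_iff.2 fun j (_ : j ∈ range k) => hb j
  have := prod_ne_zero_iff.2 fun j (_ : j ∈ Ico k i) => hb j
  field_simp

lemma prod_range_div_prod_Ico_le {a b : ℕ → ℝ} (ha : ∀ j, 0 ≤ a j) (hab : ∀ j, a j ≤ b j)
    {k i : ℕ} (hki : k ≤ i) :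
    (∏ j ∈ range i, a j) / ∏ j ∈ Ico k i, b j ≤ ∏ j ∈ range k, a j := by
  have hb (j : ℕ) : 0 ≤ b j := (ha j).trans (hab j)
  refine div_le_of_le_mul₀ (prod_nonneg fun j _ => hb j) (prod_nonneg fun j _ => ha j) ?_
  rw [← prod_range_mul_prod_Ico a hki]
  exact mul_le_mul_of_nonneg_left (prod_le_prod (fun j _ => ha j) fun j _ => hab j)
    (prod_nonneg fun j _ => ha j)

noncomputable section

variable (l : ℕ → ℕ)

def reducedLogFactorialSum (i : ℕ) : ℝ :=
  ∑ k ∈ range (i + 1), (∏ j ∈ range k, ((l j : ℝ) - 2)) * log ((l k - 2)! : ℝ)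

def logFactorialSum (i : ℕ) : ℝ :=
  ∑ k ∈ range (i + 1), (∏ j ∈ range k, (l j : ℝ)) * log ((l k)! : ℝ)

variable {l}

lemma log_factorial_nonneg (n : ℕ) : 0 ≤ log (n ! : ℝ) :=
  log_nonneg (by exact_mod_cast n.factorial_pos)

lemma logFactorialSum_pos (hl : 2 ≤ l 0) (i : ℕ) : 0 < logFactorialSum l i := by
  refine sum_pos' (fun k _ => mul_nonneg (by positivity) (log_factorial_nonneg _))
    ⟨0, mem_range.2 i.succ_pos, ?_⟩
  rw [range_zero, prod_empty, one_mul]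
  exact log_pos (by exact_mod_cast (Nat.one_lt_two.trans_le hl).trans_le (l 0).self_le_factorial)

lemma reducedLogFactorialSum_le (hl : ∀ j, 2 ≤ l j) (i : ℕ) :
    reducedLogFactorialSum l i ≤ logFactorialSum l i := by
  have hl' (j : ℕ) : (2 : ℝ) ≤ l j := by exact_mod_cast hl j
  refine sum_le_sum fun k _ => mul_le_mul ?_ ?_ (log_factorial_nonneg _) (by positivity)
  · exact prod_le_prod (fun j _ => by linarith [hl' j]) fun j _ => by linarith
  · exact log_le_log (by positivity) (by exact_mod_cast Nat.factorial_le (Nat.sub_le _ _))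

lemma mul_mul_log_factorial_le (hl : ∀ j, 2 ≤ l j) {k i : ℕ} (hki : k ≤ i) :
    (∏ j ∈ range i, ((l j : ℝ) - 2) / l j) * ((∏ j ∈ range k, (l j : ℝ)) * log ((l k)! : ℝ)) ≤
      (∏ j ∈ range k, ((l j : ℝ) - 2)) * log ((l k - 2)! : ℝ) +
        2 * (∏ j ∈ range i, ((l j : ℝ) - 2)) * (log (l k) / ∏ j ∈ Ico k i, (l j : ℝ)) := by
  have hl' (j : ℕ) : (2 : ℝ) ≤ l j := by exact_mod_cast hl j
  set P := ∏ j ∈ range i, ((l j : ℝ) - 2)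
  set D := ∏ j ∈ Ico k i, (l j : ℝ)
  have hPD : 0 ≤ P / D :=
    div_nonneg (prod_nonneg fun j _ => by linarith [hl' j])
      (prod_nonneg fun j _ => by linarith [hl' j])
  rw [← mul_assoc, prod_div_mul_prod_range (fun j => by linarith [hl' j]) hki]
  calc P / D * log ((l k)! : ℝ) ≤ P / D * (2 * log (l k) + log ((l k - 2)! : ℝ)) :=
        mul_le_mul_of_nonneg_left (log_factorial_le (hl k)) hPD
    _ = P / D * log ((l k - 2)! : ℝ) + 2 * P * (log (l k) / D) := by ring
    _ ≤ _ := by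
        gcongr ?_ * _ + _
        exact prod_range_div_prod_Ico_le (fun j => by linarith [hl' j]) (fun j => by linarith) hki

theorem div_mul_logFactorialSum_le (hl : ∀ j, 5 ≤ l j) (i : ℕ) :
    (∏ j ∈ range i, ((l j : ℝ) - 2) / l j) / (1 + 16 / l i) * logFactorialSum l i ≤
      reducedLogFactorialSum l i := by
  have hl' (j : ℕ) : (5 : ℝ) ≤ l j := by exact_mod_cast hl j
  have hli : (0 : ℝ) < l i := by linarith [hl' i]
  set P : ℕ → ℝ := fun k => ∏ j ∈ range k, ((l j : ℝ) - 2)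
  set A := reducedLogFactorialSum l i
  have hP_pos (k : ℕ) : 0 < P k := prod_pos fun j _ => by linarith [hl' j]
  have hlast : P i * log ((l i - 2)! : ℝ) ≤ A :=
    single_le_sum (f := fun k => P k * log ((l k - 2)! : ℝ))
      (fun k _ => mul_nonneg (hP_pos k).le (log_factorial_nonneg _)) (self_mem_range_succ i)
  rw [div_mul_eq_mul_div, div_le_iff₀ (by positivity), logFactorialSum, mul_sum]
  calc _ ≤ ∑ k ∈ range (i + 1), (P k * log ((l k - 2)! : ℝ) +
          2 * P i * (log (l k) / ∏ j ∈ Ico k i, (l j : ℝ))) :=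
        sum_le_sum fun k hk =>
          mul_mul_log_factorial_le (fun j => (show 2 ≤ 5 by norm_num).trans (hl j))
            (Nat.lt_succ_iff.mp (mem_range.mp hk))
    _ = A + 2 * P i * ∑ k ∈ range (i + 1), log (l k) / ∏ j ∈ Ico k i, (l j : ℝ) := by
        rw [sum_add_distrib, ← mul_sum]; rfl
    _ ≤ A + 2 * P i * (3 / 2 * log (l i)) := by
        gcongr A + 2 * P i * ?_
        · linarith [hP_pos i]
        · exact sum_log_div_prod_Ico_le (x := fun j => (l j : ℝ)) hl' i
    _ = A + P i * (3 * l i * log (l i)) / l i := by field_simp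
    _ ≤ A + P i * (16 * log ((l i - 2)! : ℝ)) / l i := by
        gcongr A + P i * ?_ / _
        · exact (hP_pos i).le
        · exact three_mul_log_le_log_factorial_sub_two (hl i)
    _ = A + 16 / l i * (P i * log ((l i - 2)! : ℝ)) := by ring
    _ ≤ A + 16 / l i * A := by gcongr
    _ = A * (1 + 16 / l i) := by ring

end

/-- Lower-bound half of the dimension computation: with `α_i = ∏_{j<i}(l j - 2)/(l j)`,
for each `i` there is `T` with `0 ≤ T ≤ 16 / l i` such that
`∑_{k≤i} p_k·log((l_k-2)!) ≥ α_i · (1/(1+T)) · ∑_{k≤i} q_k·log(l_k!)`;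
and if `l i → ∞` and `α_i → α`, then `α ≤ liminf` of the ratio of the two sums. -/
theorem stmt_15 (l : ℕ → ℕ) (hl : ∀ i, 5 ≤ l i) :
    (∀ i : ℕ, ∃ T : ℝ, 0 ≤ T ∧ T ≤ 16 / (l i : ℝ) ∧
        (∑ k ∈ Finset.range (i + 1),
            (∏ j ∈ Finset.range k, ((l j : ℝ) - 2)) * Real.log ((l k - 2).factorial)) ≥
          (∏ j ∈ Finset.range i, ((l j : ℝ) - 2) / (l j)) * (1 / (1 + T)) *
            (∑ k ∈ Finset.range (i + 1),
              (∏ j ∈ Finset.range k, (l j : ℝ)) * Real.log ((l k).factorial))) ∧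
    (∀ α : ℝ, Tendsto (fun i => (l i : ℝ)) atTop atTop →
      Tendsto (fun i => ∏ j ∈ Finset.range i, ((l j : ℝ) - 2) / (l j)) atTop (nhds α) →
      α ≤ liminf (fun i =>
        (∑ k ∈ Finset.range (i + 1),
            (∏ j ∈ Finset.range k, ((l j : ℝ) - 2)) * Real.log ((l k - 2).factorial)) /
        (∑ k ∈ Finset.range (i + 1),
            (∏ j ∈ Finset.range k, (l j : ℝ)) * Real.log ((l k).factorial))) atTop) := by
  have hl2 (j : ℕ) : 2 ≤ l j := le_trans (by norm_num) (hl j)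
  refine ⟨fun i => ⟨16 / l i, by positivity, le_rfl, ?_⟩, fun α hl_top hα => ?_⟩
  · rw [ge_iff_le, mul_one_div]
    exact div_mul_logFactorialSum_le hl i
  have hlower : Tendsto (fun i => (∏ j ∈ range i, ((l j : ℝ) - 2) / l j) / (1 + 16 / l i))
      atTop (nhds α) := by
    simpa [Pi.div_def] using hα.div
      (tendsto_const_nhds.add (tendsto_const_nhds.div_atTop hl_top)) (by norm_num : (1 : ℝ) + 0 ≠ 0)
  have hratio_le_one : IsBoundedUnder (· ≤ ·) atTop
      (fun i => reducedLogFactorialSum l i / logFactorialSum l i) :=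
    isBoundedUnder_of ⟨1, fun i =>
      div_le_one_of_le₀ (reducedLogFactorialSum_le hl2 i) (logFactorialSum_pos (hl2 0) i).le⟩
  rw [← hlower.liminf_eq]
  exact liminf_le_liminf (Eventually.of_forall fun i =>
      (le_div_iff₀ (logFactorialSum_pos (hl2 0) i)).2 (div_mul_logFactorialSum_le hl i))
    hlower.isBoundedUnder_ge hratio_le_one.isCoboundedUnder_ge
end
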